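/- arXiv:2501.06799 — 5 statements merged into one kernel-verified Lean document; each statement's English description precedes it below -/
import Mathlib

section
/- Let I be a fair division instance with v_i(o) ∈ {-1, 0, 1} for all agents i and items o in which every item is valued at 1 by at least one agent, and let I^G be the instance obtained from I by replacing every value -1 with 0 (so all valuations in I^G lie in {0, 1}). Then I admits an allocation that is simultaneously EQ1 and Pareto optimal if and only if every Nash optimal allocation of I^G is EQ1 (with respect to the valuations of I^G). -/
open Finset

/-- A complete allocation: pairwise disjoint bundles covering all items. -/
def isAllocation {n : ℕ} {ι : Type*} [Fintype ι] [DecidableEq ι]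
    (A : Fin n → Finset ι) : Prop :=
  (∀ i j : Fin n, i ≠ j → Disjoint (A i) (A j)) ∧
    Finset.univ.biUnion A = Finset.univ

/-- Equitability up to one item. -/
def EQ1 {n : ℕ} {ι : Type*} [DecidableEq ι]
    (v : Fin n → ι → ℤ) (A : Fin n → Finset ι) : Prop :=
  ∀ i j : Fin n, ∑ o ∈ A i, v i o < ∑ o ∈ A j, v j o →
    (∃ g ∈ A j, 0 ≤ v j g ∧ ∑ o ∈ (A j).erase g, v j o ≤ ∑ o ∈ A i, v i o) ∨
    (∃ c ∈ A i, v i c ≤ 0 ∧ ∑ o ∈ A j, v j o ≤ ∑ o ∈ (A i).erase c, v i o)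

/-- Pareto optimality. -/
def Pareto {n : ℕ} {ι : Type*} [Fintype ι] [DecidableEq ι]
    (v : Fin n → ι → ℤ) (A : Fin n → Finset ι) : Prop :=
  ¬ ∃ B : Fin n → Finset ι, isAllocation B ∧
      (∀ i, ∑ o ∈ A i, v i o ≤ ∑ o ∈ B i, v i o) ∧
      (∃ j, ∑ o ∈ A j, v j o < ∑ o ∈ B j, v j o)

/-- The number of agents with strictly positive utility. -/
def posCount {n : ℕ} {ι : Type*} [DecidableEq ι]
    (v : Fin n → ι → ℤ) (A : Fin n → Finset ι) : ℕ :=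
  (Finset.univ.filter (fun i : Fin n => 0 < ∑ o ∈ A i, v i o)).card

/-- The product of the utilities of the agents with strictly positive utility. -/
def posProd {n : ℕ} {ι : Type*} [DecidableEq ι]
    (v : Fin n → ι → ℤ) (A : Fin n → Finset ι) : ℤ :=
  ∏ i ∈ Finset.univ.filter (fun i : Fin n => 0 < ∑ o ∈ A i, v i o),
    ∑ o ∈ A i, v i o

/-- Nash optimal: maximizes the number of agents with positive utility and,
subject to that, the product of their utilities. -/
def NashOptimal {n : ℕ} {ι : Type*} [Fintype ι] [DecidableEq ι]
    (v : Fin n → ι → ℤ) (A : Fin n → Finset ι) : Prop :=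
  isAllocation A ∧ ∀ B : Fin n → Finset ι, isAllocation B →
    posCount v B ≤ posCount v A ∧
    (posCount v B = posCount v A → posProd v B ≤ posProd v A)

namespace Stmt15Aux
set_option linter.unusedSectionVars false
set_option linter.unusedVariables false

open Finset

variable {n : ℕ} {ι : Type*} [Fintype ι] [DecidableEq ι]

/-- The bundle of agent `i` under the item-assignment `f`. -/
def bun (f : ι → Fin n) (i : Fin n) : Finset ι := Finset.univ.filter fun o => f o = i

/-- The number of items assigned to agent `i`. -/
def cnt (f : ι → Fin n) (i : Fin n) : ℕ := (bun f i).card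

lemma mem_bun {f : ι → Fin n} {i : Fin n} {o : ι} : o ∈ bun f i ↔ f o = i := by
  simp [bun]

lemma bun_alloc (f : ι → Fin n) : isAllocation (bun f) := by
  constructor
  · intro i j hij
    rw [Finset.disjoint_left]
    intro o hoi hoj
    rw [mem_bun] at hoi hoj
    exact hij (hoi ▸ hoj ▸ rfl)
  · ext o
    simp only [Finset.mem_biUnion, Finset.mem_univ, iff_true, mem_bun]
    exact ⟨f o, trivial, rfl⟩

lemma sum_bun (u : Fin n → ι → ℤ) {f : ι → Fin n} (hu : ∀ o, u (f o) o = 1) (i : Fin n) :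
    ∑ o ∈ bun f i, u i o = (cnt f i : ℤ) := by
  rw [cnt, Finset.card_eq_sum_ones]
  push_cast
  refine Finset.sum_congr rfl fun o ho => ?_
  rw [mem_bun] at ho
  rw [← ho]
  exact hu o

lemma bun_update_src {f : ι → Fin n} {o₀ : ι} {q : Fin n} (h : f o₀ ≠ q) :
    bun (Function.update f o₀ q) (f o₀) = (bun f (f o₀)).erase o₀ := by
  ext o
  simp only [mem_bun, Finset.mem_erase, Function.update_apply]
  by_cases ho : o = o₀ <;> simp [ho, h, Ne.symm h]

lemma bun_update_tgt {f : ι → Fin n} {o₀ : ι} {q : Fin n} (h : f o₀ ≠ q) :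
    bun (Function.update f o₀ q) q = insert o₀ (bun f q) := by
  ext o
  simp only [mem_bun, Finset.mem_insert, Function.update_apply]
  by_cases ho : o = o₀ <;> simp [ho]

lemma bun_update_other {f : ι → Fin n} {o₀ : ι} {q : Fin n} {k : Fin n}
    (hk1 : k ≠ f o₀) (hk2 : k ≠ q) :
    bun (Function.update f o₀ q) k = bun f k := by
  ext o
  simp only [mem_bun, Function.update_apply]
  by_cases ho : o = o₀ <;> simp [ho, Ne.symm hk1, Ne.symm hk2]

lemma cnt_update_src {f : ι → Fin n} {o₀ : ι} {q : Fin n} (h : f o₀ ≠ q) :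
    cnt (Function.update f o₀ q) (f o₀) + 1 = cnt f (f o₀) := by
  rw [cnt, cnt, bun_update_src h]
  exact Finset.card_erase_add_one (mem_bun.mpr rfl)

lemma cnt_update_tgt {f : ι → Fin n} {o₀ : ι} {q : Fin n} (h : f o₀ ≠ q) :
    cnt (Function.update f o₀ q) q = cnt f q + 1 := by
  rw [cnt, cnt, bun_update_tgt h]
  exact Finset.card_insert_of_notMem (fun hm => h (mem_bun.mp hm))

lemma cnt_update_other {f : ι → Fin n} {o₀ : ι} {q : Fin n} {k : Fin n}
    (hk1 : k ≠ f o₀) (hk2 : k ≠ q) :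
    cnt (Function.update f o₀ q) k = cnt f k := by
  rw [cnt, cnt, bun_update_other hk1 hk2]

end Stmt15Aux
namespace Stmt15Aux

open Finset

variable {n : ℕ} {ι : Type*} [Fintype ι] [DecidableEq ι]

/-- Exchange lemma: if `f` gives agent `p` more items than `g` does, then one item can be
transferred away from `p` (along a path) reaching an agent `i'` who gets fewer items in `f`
than in `g`. -/
lemma exchange_rich (w : Fin n → ι → ℤ) :
    ∀ (N : ℕ) (f g : ι → Fin n), (Finset.univ.filter fun o => f o ≠ g o).card ≤ N →
    (∀ o, w (f o) o = 1) → (∀ o, w (g o) o = 1) →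
    ∀ p : Fin n, cnt g p < cnt f p →
    ∃ (f' : ι → Fin n) (i' : Fin n), (∀ o, w (f' o) o = 1) ∧ i' ≠ p ∧
      cnt f i' < cnt g i' ∧ cnt f' p + 1 = cnt f p ∧ cnt f' i' = cnt f i' + 1 ∧
      ∀ k, k ≠ p → k ≠ i' → cnt f' k = cnt f k := by
  intro N
  induction N with
  | zero =>
    intro f g hD hf hg p hp
    exfalso
    have hfg : f = g := by
      funext o
      by_contra hne
      have : o ∈ Finset.univ.filter fun o => f o ≠ g o := by simp [hne]
      have := Finset.card_pos.mpr ⟨o, this⟩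
      omega
    rw [hfg] at hp
    omega
  | succ N ih =>
    intro f g hD hf hg p hp
    have hex : ∃ o, f o = p ∧ g o ≠ p := by
      by_contra h
      push_neg at h
      have hsub : bun f p ⊆ bun g p := by
        intro o ho
        rw [mem_bun] at ho ⊢
        exact h o ho
      have := Finset.card_le_card hsub
      unfold cnt at hp
      omega
    obtain ⟨o₀, ho₀f, ho₀g⟩ := hex
    set q := g o₀ with hq
    have hqp : q ≠ p := ho₀g
    have hfq : f o₀ ≠ q := by rw [ho₀f]; exact Ne.symm hqp
    set f₁ := Function.update f o₀ q with hf₁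
    have hlov₁ : ∀ o, w (f₁ o) o = 1 := by
      intro o
      by_cases ho : o = o₀
      · subst ho; rw [hf₁, Function.update_self, hq]; exact hg o
      · rw [hf₁, Function.update_of_ne ho]; exact hf o
    have h1 : cnt f₁ p + 1 = cnt f p := by
      rw [hf₁, ← ho₀f]; exact cnt_update_src hfq
    have h2 : cnt f₁ q = cnt f q + 1 := by
      rw [hf₁]; exact cnt_update_tgt hfq
    have h3 : ∀ k, k ≠ p → k ≠ q → cnt f₁ k = cnt f k := by
      intro k hk1 hk2
      rw [hf₁]; exact cnt_update_other (by rw [ho₀f]; exact hk1) hk2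
    by_cases hqlt : cnt f q < cnt g q
    · exact ⟨f₁, q, hlov₁, hqp, hqlt, h1, h2, h3⟩
    · push_neg at hqlt
      have hcnt : cnt g q < cnt f₁ q := by omega
      have hD₁ : (Finset.univ.filter fun o => f₁ o ≠ g o).card ≤ N := by
        have hsub : (Finset.univ.filter fun o => f₁ o ≠ g o) ⊆
            (Finset.univ.filter fun o => f o ≠ g o).erase o₀ := by
          intro o ho
          simp only [Finset.mem_filter, Finset.mem_univ, true_and] at ho
          have hoo : o ≠ o₀ := by
            intro h; subst h
            rw [hf₁, Function.update_self] at ho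
            exact ho hq
          rw [Finset.mem_erase]
          refine ⟨hoo, ?_⟩
          simp only [Finset.mem_filter, Finset.mem_univ, true_and]
          rw [hf₁, Function.update_of_ne hoo] at ho
          exact ho
        have ho₀mem : o₀ ∈ Finset.univ.filter fun o => f o ≠ g o := by
          simp only [Finset.mem_filter, Finset.mem_univ, true_and]
          rw [ho₀f]; exact Ne.symm ho₀g
        have := Finset.card_le_card hsub
        rw [Finset.card_erase_of_mem ho₀mem] at this
        omega
      obtain ⟨f₂, i'', hlov₂, hi''q, hlt, hA, hB, hC⟩ := ih f₁ g hD₁ hlov₁ hg q hcnt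
      have hi''p : i'' ≠ p := by
        intro h; subst h
        have := h1
        omega
      refine ⟨f₂, i'', hlov₂, hi''p, ?_, ?_, ?_, ?_⟩
      · rw [← h3 i'' hi''p hi''q]; exact hlt
      · have := hC p (Ne.symm hqp) (Ne.symm hi''p)
        omega
      · rw [hB, h3 i'' hi''p hi''q]
      · intro k hkp hki''
        by_cases hkq : k = q
        · subst hkq; omega
        · rw [hC k hkq hki'', h3 k hkp hkq]

/-- Reverse exchange lemma: if `f` gives agent `r` fewer items than `g` does, then one item can
be transferred to `r` (along a path) from an agent `j'` who gets more items in `f` than in `g`. -/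
lemma exchange_poor (w : Fin n → ι → ℤ) :
    ∀ (N : ℕ) (f g : ι → Fin n), (Finset.univ.filter fun o => f o ≠ g o).card ≤ N →
    (∀ o, w (f o) o = 1) → (∀ o, w (g o) o = 1) →
    ∀ r : Fin n, cnt f r < cnt g r →
    ∃ (f' : ι → Fin n) (j' : Fin n), (∀ o, w (f' o) o = 1) ∧ j' ≠ r ∧
      cnt g j' < cnt f j' ∧ cnt f' r = cnt f r + 1 ∧ cnt f' j' + 1 = cnt f j' ∧
      ∀ k, k ≠ r → k ≠ j' → cnt f' k = cnt f k := by
  intro N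
  induction N with
  | zero =>
    intro f g hD hf hg r hr
    exfalso
    have hfg : f = g := by
      funext o
      by_contra hne
      have : o ∈ Finset.univ.filter fun o => f o ≠ g o := by simp [hne]
      have := Finset.card_pos.mpr ⟨o, this⟩
      omega
    rw [hfg] at hr
    omega
  | succ N ih =>
    intro f g hD hf hg r hr
    have hex : ∃ o, g o = r ∧ f o ≠ r := by
      by_contra h
      push_neg at h
      have hsub : bun g r ⊆ bun f r := by
        intro o ho
        rw [mem_bun] at ho ⊢
        exact h o ho
      have := Finset.card_le_card hsub
      unfold cnt at hr
      omega
    obtain ⟨o₀, ho₀g, ho₀f⟩ := hex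
    set q := f o₀ with hq
    have hqr : q ≠ r := ho₀f
    have hfr : f o₀ ≠ r := ho₀f
    set f₁ := Function.update f o₀ r with hf₁
    have hlov₁ : ∀ o, w (f₁ o) o = 1 := by
      intro o
      by_cases ho : o = o₀
      · subst ho; rw [hf₁, Function.update_self, ← ho₀g]; exact hg o
      · rw [hf₁, Function.update_of_ne ho]; exact hf o
    have h1 : cnt f₁ r = cnt f r + 1 := by
      rw [hf₁]; exact cnt_update_tgt hfr
    have h2 : cnt f₁ q + 1 = cnt f q := by
      rw [hf₁, hq]; exact cnt_update_src hfr
    have h3 : ∀ k, k ≠ r → k ≠ q → cnt f₁ k = cnt f k := by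
      intro k hk1 hk2
      rw [hf₁]; exact cnt_update_other (by rw [← hq]; exact hk2) hk1
    by_cases hqlt : cnt g q < cnt f q
    · exact ⟨f₁, q, hlov₁, hqr, hqlt, h1, h2, h3⟩
    · push_neg at hqlt
      have hcnt : cnt f₁ q < cnt g q := by omega
      have hD₁ : (Finset.univ.filter fun o => f₁ o ≠ g o).card ≤ N := by
        have hsub : (Finset.univ.filter fun o => f₁ o ≠ g o) ⊆
            (Finset.univ.filter fun o => f o ≠ g o).erase o₀ := by
          intro o ho
          simp only [Finset.mem_filter, Finset.mem_univ, true_and] at ho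
          have hoo : o ≠ o₀ := by
            intro h; subst h
            rw [hf₁, Function.update_self] at ho
            exact ho ho₀g.symm
          rw [Finset.mem_erase]
          refine ⟨hoo, ?_⟩
          simp only [Finset.mem_filter, Finset.mem_univ, true_and]
          rw [hf₁, Function.update_of_ne hoo] at ho
          exact ho
        have ho₀mem : o₀ ∈ Finset.univ.filter fun o => f o ≠ g o := by
          simp only [Finset.mem_filter, Finset.mem_univ, true_and]
          rw [ho₀g]; exact ho₀f
        have := Finset.card_le_card hsub
        rw [Finset.card_erase_of_mem ho₀mem] at this
        omega
      obtain ⟨f₂, j'', hlov₂, hj''q, hgt, hA, hB, hC⟩ := ih f₁ g hD₁ hlov₁ hg q hcnt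
      have hj''r : j'' ≠ r := by
        intro h; subst h
        rw [h1] at hgt
        omega
      refine ⟨f₂, j'', hlov₂, hj''r, ?_, ?_, ?_, ?_⟩
      · rw [← h3 j'' hj''r hj''q]; exact hgt
      · have := hC r (Ne.symm hqr) (Ne.symm hj''r)
        omega
      · rw [hB, h3 j'' hj''r hj''q]
      · intro k hkr hkj''
        by_cases hkq : k = q
        · subst hkq; omega
        · rw [hC k hkq hkj'', h3 k hkr hkq]

end Stmt15Aux
namespace Stmt15Aux

open Finset

variable {n : ℕ} {ι : Type*} [Fintype ι] [DecidableEq ι]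

/-- A Nash optimal allocation admits no Pareto improvement. -/
lemma nash_no_pointwise (w : Fin n → ι → ℤ) (hw : ∀ i o, 0 ≤ w i o)
    {A : Fin n → Finset ι} (hN : NashOptimal w A)
    {B : Fin n → Finset ι} (hB : isAllocation B)
    (hle : ∀ k, ∑ o ∈ A k, w k o ≤ ∑ o ∈ B k, w k o)
    (j : Fin n) (hj : ∑ o ∈ A j, w j o < ∑ o ∈ B j, w j o) : False := by
  classical
  set SA := Finset.univ.filter (fun k : Fin n => 0 < ∑ o ∈ A k, w k o) with hSA
  set SB := Finset.univ.filter (fun k : Fin n => 0 < ∑ o ∈ B k, w k o) with hSB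
  have hsub : SA ⊆ SB := by
    intro k hk
    simp only [hSA, hSB, Finset.mem_filter, Finset.mem_univ, true_and] at hk ⊢
    exact lt_of_lt_of_le hk (hle k)
  have hcard : posCount w B ≤ posCount w A := (hN.2 B hB).1
  have hSBA : SB = SA := (Finset.eq_of_subset_of_card_le hsub hcard).symm
  have hjB : j ∈ SB := by
    simp only [hSB, Finset.mem_filter, Finset.mem_univ, true_and]
    exact lt_of_le_of_lt (Finset.sum_nonneg fun o _ => hw j o) hj
  have hprod : posProd w A < posProd w B := by
    rw [posProd, posProd, ← hSA, ← hSB, hSBA]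
    refine Finset.prod_lt_prod ?_ (fun k hk => hle k) ⟨j, hSBA ▸ hjB, hj⟩
    intro k hk
    simp only [hSA, Finset.mem_filter, Finset.mem_univ, true_and] at hk
    exact hk
  have := (hN.2 B hB).2 (le_antisymm hcard (by rw [posCount, posCount, ← hSA, ← hSB, hSBA]))
  omega

/-- Transferring a unit of utility from a rich agent `x` to an agent `y` poorer by at least 2
contradicts Nash optimality. -/
lemma nash_no_transfer (w : Fin n → ι → ℤ) (hw : ∀ i o, 0 ≤ w i o)
    {A : Fin n → Finset ι} (hN : NashOptimal w A)
    {B : Fin n → Finset ι} (hB : isAllocation B) {x y : Fin n} (hxy : x ≠ y)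
    (hx : ∑ o ∈ B x, w x o + 1 = ∑ o ∈ A x, w x o)
    (hy : ∑ o ∈ B y, w y o = ∑ o ∈ A y, w y o + 1)
    (hoth : ∀ k, k ≠ x → k ≠ y → ∑ o ∈ B k, w k o = ∑ o ∈ A k, w k o)
    (hgap : ∑ o ∈ A y, w y o + 2 ≤ ∑ o ∈ A x, w x o) : False := by
  classical
  have hAnn : ∀ k, 0 ≤ ∑ o ∈ A k, w k o := fun k => Finset.sum_nonneg fun o _ => hw k o
  set SA := Finset.univ.filter (fun k : Fin n => 0 < ∑ o ∈ A k, w k o) with hSA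
  set SB := Finset.univ.filter (fun k : Fin n => 0 < ∑ o ∈ B k, w k o) with hSB
  have hxSA : x ∈ SA := by
    simp only [hSA, Finset.mem_filter, Finset.mem_univ, true_and]
    have := hAnn y; omega
  have hxSB : x ∈ SB := by
    simp only [hSB, Finset.mem_filter, Finset.mem_univ, true_and]
    have := hAnn y; omega
  have hySB : y ∈ SB := by
    simp only [hSB, Finset.mem_filter, Finset.mem_univ, true_and]
    have := hAnn y; omega
  have hsub : SA ⊆ SB := by
    intro k hk
    simp only [hSA, hSB, Finset.mem_filter, Finset.mem_univ, true_and] at hk ⊢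
    by_cases hkx : k = x
    · subst hkx; have := hAnn y; omega
    · by_cases hky : k = y
      · subst hky; omega
      · rw [hoth k hkx hky]; exact hk
  have hcard : posCount w B ≤ posCount w A := (hN.2 B hB).1
  by_cases hy0 : 0 < ∑ o ∈ A y, w y o
  · -- same positive sets; product strictly increases
    have hySA : y ∈ SA := by
      simp only [hSA, Finset.mem_filter, Finset.mem_univ, true_and]; exact hy0
    have hSBA : SB = SA := (Finset.eq_of_subset_of_card_le hsub hcard).symm
    have hcnteq : posCount w B = posCount w A := by
      rw [posCount, posCount, ← hSA, ← hSB, hSBA]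
    have hprodle : posProd w B ≤ posProd w A := (hN.2 B hB).2 hcnteq
    -- compute products
    have hySA' : y ∈ SA.erase x := Finset.mem_erase.mpr ⟨Ne.symm hxy, hySA⟩
    set T := (SA.erase x).erase y with hT
    have hTmem : ∀ k ∈ T, k ≠ x ∧ k ≠ y ∧ k ∈ SA := by
      intro k hk
      rw [hT, Finset.mem_erase, Finset.mem_erase] at hk
      exact ⟨hk.2.1, hk.1, hk.2.2⟩
    have hprodA : posProd w A =
        (∑ o ∈ A x, w x o) * ((∑ o ∈ A y, w y o) * ∏ k ∈ T, ∑ o ∈ A k, w k o) := by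
      rw [posProd, ← hSA, ← Finset.mul_prod_erase SA _ hxSA, ← Finset.mul_prod_erase _ _ hySA']
    have hprodB : posProd w B =
        (∑ o ∈ B x, w x o) * ((∑ o ∈ B y, w y o) * ∏ k ∈ T, ∑ o ∈ B k, w k o) := by
      rw [posProd, ← hSB, hSBA, ← Finset.mul_prod_erase SA _ hxSA, ← Finset.mul_prod_erase _ _ hySA']
    have hTeq : ∏ k ∈ T, ∑ o ∈ B k, w k o = ∏ k ∈ T, ∑ o ∈ A k, w k o := by
      refine Finset.prod_congr rfl fun k hk => ?_
      obtain ⟨h1, h2, _⟩ := hTmem k hk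
      exact hoth k h1 h2
    have hTpos : 0 < ∏ k ∈ T, ∑ o ∈ A k, w k o := by
      refine Finset.prod_pos fun k hk => ?_
      obtain ⟨_, _, h3⟩ := hTmem k hk
      simp only [hSA, Finset.mem_filter, Finset.mem_univ, true_and] at h3
      exact h3
    rw [hprodA, hprodB, hTeq] at hprodle
    have hBx : ∑ o ∈ B x, w x o = ∑ o ∈ A x, w x o - 1 := by omega
    have hBy : ∑ o ∈ B y, w y o = ∑ o ∈ A y, w y o + 1 := by omega
    rw [hBx, hBy] at hprodle
    have hkey : (0:ℤ) < (∑ o ∈ A x, w x o - ∑ o ∈ A y, w y o - 1) * ∏ k ∈ T, ∑ o ∈ A k, w k o :=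
      mul_pos (by omega) hTpos
    nlinarith [hprodle, hkey]
  · -- y newly positive: positive count strictly increases
    push_neg at hy0
    have hy0' : ∑ o ∈ A y, w y o = 0 := le_antisymm hy0 (hAnn y)
    have hySA : y ∉ SA := by
      simp only [hSA, Finset.mem_filter, Finset.mem_univ, true_and]
      omega
    have hss : SA ⊂ SB := ⟨hsub, fun h => hySA (h hySB)⟩
    have := Finset.card_lt_card hss
    rw [posCount, posCount, ← hSA, ← hSB] at hcard
    omega

end Stmt15Aux
namespace Stmt15Aux

open Finset

variable {n : ℕ} {ι : Type*} [Fintype ι] [DecidableEq ι]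

/-- Move item `o` from agent `i`'s bundle to agent `j`'s bundle. -/
def move (A : Fin n → Finset ι) (o : ι) (i j : Fin n) : Fin n → Finset ι :=
  fun k => if k = i then (A i).erase o else if k = j then insert o (A j) else A k

lemma mem_move {A : Fin n → Finset ι} {o : ι} {i j : Fin n} (hij : i ≠ j) {k : Fin n} {x : ι} :
    x ∈ move A o i j k ↔ (x ∈ A k ∧ ¬(k = i ∧ x = o)) ∨ (k = j ∧ x = o) := by
  by_cases hki : k = i
  · subst hki
    simp only [move, if_true, eq_self_iff_true, Finset.mem_erase]
    constructor
    · rintro ⟨hxo, hx⟩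
      exact Or.inl ⟨hx, fun h => hxo h.2⟩
    · rintro (⟨hx, hno⟩ | ⟨h, rfl⟩)
      · exact ⟨fun h => hno ⟨trivial, h⟩, hx⟩
      · exact absurd h hij
  · by_cases hkj : k = j
    · subst hkj
      simp only [move, if_neg hki, if_true, eq_self_iff_true, Finset.mem_insert]
      constructor
      · rintro (rfl | hx)
        · exact Or.inr ⟨trivial, rfl⟩
        · exact Or.inl ⟨hx, fun h => hki h.1⟩
      · rintro (⟨hx, _⟩ | ⟨_, rfl⟩)
        · exact Or.inr hx
        · exact Or.inl rfl
    · simp only [move]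
      rw [if_neg hki, if_neg hkj]
      constructor
      · intro hx
        exact Or.inl ⟨hx, fun h => hki h.1⟩
      · rintro (⟨hx, _⟩ | ⟨h, _⟩)
        · exact hx
        · exact absurd h hkj

lemma move_alloc {A : Fin n → Finset ι} (hA : isAllocation A) {o : ι} {i j : Fin n}
    (ho : o ∈ A i) (hij : i ≠ j) : isAllocation (move A o i j) := by
  constructor
  · intro a b hab
    rw [Finset.disjoint_left]
    intro x hxa hxb
    rw [mem_move hij] at hxa hxb
    rcases hxa with ⟨hxa, hna⟩ | ⟨rfl, rfl⟩
    · rcases hxb with ⟨hxb, hnb⟩ | ⟨rfl, rfl⟩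
      · exact Finset.disjoint_left.mp (hA.1 a b hab) hxa hxb
      · have hai : a ≠ i := fun h => hna ⟨h, rfl⟩
        exact Finset.disjoint_left.mp (hA.1 a i hai) hxa ho
    · rcases hxb with ⟨hxb, hnb⟩ | ⟨rfl, _⟩
      · have hbi : b ≠ i := fun h => hnb ⟨h, rfl⟩
        exact Finset.disjoint_left.mp (hA.1 b i hbi) hxb ho
      · exact hab rfl
  · ext x
    simp only [Finset.mem_biUnion, Finset.mem_univ, iff_true, true_and]
    by_cases hxo : x = o
    · exact ⟨j, (mem_move hij).mpr (Or.inr ⟨rfl, hxo⟩)⟩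
    · have : x ∈ Finset.univ.biUnion A := hA.2 ▸ Finset.mem_univ x
      obtain ⟨k, _, hk⟩ := Finset.mem_biUnion.mp this
      exact ⟨k, (mem_move hij).mpr (Or.inl ⟨hk, fun h => hxo h.2⟩)⟩

lemma move_sum_src (w : Fin n → ι → ℤ) {A : Fin n → Finset ι} {o : ι} {i j : Fin n}
    (ho : o ∈ A i) (hij : i ≠ j) :
    ∑ x ∈ move A o i j i, w i x + w i o = ∑ x ∈ A i, w i x := by
  simp only [move, if_pos rfl]
  exact Finset.sum_erase_add _ _ ho

lemma move_sum_tgt (w : Fin n → ι → ℤ) {A : Fin n → Finset ι} (hA : isAllocation A)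
    {o : ι} {i j : Fin n} (ho : o ∈ A i) (hij : i ≠ j) :
    ∑ x ∈ move A o i j j, w j x = ∑ x ∈ A j, w j x + w j o := by
  have hoj : o ∉ A j := Finset.disjoint_left.mp (hA.1 i j hij) ho
  simp only [move, if_neg (Ne.symm hij), if_pos rfl]
  exact (Finset.sum_insert hoj).trans (add_comm _ _)

lemma move_sum_other (w : Fin n → ι → ℤ) {A : Fin n → Finset ι} {o : ι} {i j k : Fin n}
    (hki : k ≠ i) (hkj : k ≠ j) :
    ∑ x ∈ move A o i j k, w k x = ∑ x ∈ A k, w k x := by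
  simp only [move, if_neg hki, if_neg hkj]

/-- Every allocation comes from an item-assignment function. -/
lemma alloc_exists_fun {A : Fin n → Finset ι} (hA : isAllocation A) :
    ∃ f : ι → Fin n, ∀ i, A i = bun f i := by
  have hcov : ∀ o : ι, ∃ i, o ∈ A i := fun o => by
    have : o ∈ Finset.univ.biUnion A := hA.2 ▸ Finset.mem_univ o
    obtain ⟨i, _, hi⟩ := Finset.mem_biUnion.mp this
    exact ⟨i, hi⟩
  choose f hf using hcov
  refine ⟨f, fun i => ?_⟩
  ext o
  rw [mem_bun]
  constructor
  · intro ho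
    by_contra hne
    exact Finset.disjoint_left.mp (hA.1 (f o) i hne) (hf o) ho
  · rintro rfl
    exact hf o

/-- In a Nash optimal allocation of a binary instance where every item is liked by someone,
every item goes to an agent that likes it. -/
lemma nash_lover (w : Fin n → ι → ℤ) (hw01 : ∀ i o, w i o = 0 ∨ w i o = 1)
    (hlov : ∀ o : ι, ∃ i, w i o = 1) {A : Fin n → Finset ι} (hN : NashOptimal w A) :
    ∃ f : ι → Fin n, (∀ o, w (f o) o = 1) ∧ ∀ i, A i = bun f i := by
  obtain ⟨f, hf⟩ := alloc_exists_fun hN.1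
  refine ⟨f, fun o => ?_, hf⟩
  rcases hw01 (f o) o with h0 | h1
  swap
  · exact h1
  exfalso
  obtain ⟨j, hj⟩ := hlov o
  have hjf : f o ≠ j := by
    intro h
    rw [← h, h0] at hj
    exact absurd hj (by norm_num)
  have hofo : o ∈ A (f o) := by rw [hf (f o), mem_bun]
  set B := move A o (f o) j with hBdef
  have hBalloc : isAllocation B := move_alloc hN.1 hofo hjf
  have hw0 : ∀ i o, 0 ≤ w i o := by
    intro i o'
    rcases hw01 i o' with h | h <;> omega
  refine nash_no_pointwise w hw0 hN hBalloc (fun k => ?_) j ?_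
  · by_cases hki : k = f o
    · subst hki
      have := move_sum_src w (A := A) (j := j) hofo hjf
      rw [← hBdef] at this
      omega
    · by_cases hkj : k = j
      · subst hkj
        have := move_sum_tgt w hN.1 hofo hjf
        rw [← hBdef] at this
        have := hw0 k o
        omega
      · rw [hBdef, move_sum_other w hki hkj]
  · have := move_sum_tgt w hN.1 hofo hjf
    rw [← hBdef] at this
    omega

/-- In a Pareto optimal allocation (for valuations where each value is 1 or ≤ 0, with each
item liked by someone), every item goes to an agent that likes it. -/
lemma pareto_lover (u : Fin n → ι → ℤ) (hu01 : ∀ i o, u i o = 1 ∨ u i o ≤ 0)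
    (hlov : ∀ o : ι, ∃ i, u i o = 1) {A : Fin n → Finset ι} (hA : isAllocation A)
    (hP : Pareto u A) :
    ∃ f : ι → Fin n, (∀ o, u (f o) o = 1) ∧ ∀ i, A i = bun f i := by
  obtain ⟨f, hf⟩ := alloc_exists_fun hA
  refine ⟨f, fun o => ?_, hf⟩
  rcases hu01 (f o) o with h1 | h0
  · exact h1
  exfalso
  obtain ⟨j, hj⟩ := hlov o
  have hjf : f o ≠ j := by
    intro h
    rw [← h] at hj
    omega
  have hofo : o ∈ A (f o) := by rw [hf (f o), mem_bun]
  set B := move A o (f o) j with hBdef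
  have hBalloc : isAllocation B := move_alloc hA hofo hjf
  refine hP ⟨B, hBalloc, fun k => ?_, j, ?_⟩
  · by_cases hki : k = f o
    · subst hki
      have := move_sum_src u (A := A) (j := j) hofo hjf
      rw [← hBdef] at this
      omega
    · by_cases hkj : k = j
      · subst hkj
        have := move_sum_tgt u hA hofo hjf
        rw [← hBdef] at this
        omega
      · rw [hBdef, move_sum_other u hki hkj]
  · have := move_sum_tgt u hA hofo hjf
    rw [← hBdef] at this
    omega

end Stmt15Aux
namespace Stmt15Aux

open Finset

variable {n : ℕ} {ι : Type*} [Fintype ι] [DecidableEq ι]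

lemma sum_cnt (f : ι → Fin n) : ∑ i, cnt f i = Fintype.card ι := by
  have h := (bun_alloc f).1
  have := Finset.card_biUnion (s := (Finset.univ : Finset (Fin n))) (t := bun f)
    (fun x _ y _ hxy => h x y hxy)
  rw [(bun_alloc f).2] at this
  simp only [cnt]
  rw [← this, Finset.card_univ]

lemma total_le (u : Fin n → ι → ℤ) (h1 : ∀ i o, u i o ≤ 1) {B : Fin n → Finset ι}
    (hB : isAllocation B) : ∑ i, ∑ o ∈ B i, u i o ≤ (Fintype.card ι : ℤ) := by
  have hcard : ∑ i, ((B i).card : ℤ) = (Fintype.card ι : ℤ) := by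
    have := Finset.card_biUnion (s := (Finset.univ : Finset (Fin n))) (t := B)
      (fun x _ y _ hxy => hB.1 x y hxy)
    rw [hB.2, Finset.card_univ] at this
    exact_mod_cast this.symm
  rw [← hcard]
  refine Finset.sum_le_sum fun i _ => ?_
  calc ∑ o ∈ B i, u i o ≤ ∑ _o ∈ B i, (1 : ℤ) := Finset.sum_le_sum fun o _ => h1 i o
    _ = ((B i).card : ℤ) := by simp

/-- An assignment in which every agent likes each of her items is Pareto optimal. -/
lemma pareto_bun (u : Fin n → ι → ℤ) (h1 : ∀ i o, u i o ≤ 1) {f : ι → Fin n}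
    (hf : ∀ o, u (f o) o = 1) : Pareto u (bun f) := by
  rintro ⟨B, hB, hle, j, hj⟩
  have htotB := total_le u h1 hB
  have htotA : ∑ i, ∑ o ∈ bun f i, u i o = (Fintype.card ι : ℤ) := by
    have : ∑ i, ∑ o ∈ bun f i, u i o = ∑ i, (cnt f i : ℤ) :=
      Finset.sum_congr rfl fun i _ => sum_bun u hf i
    rw [this, ← Nat.cast_sum, sum_cnt]
  have hlt : ∑ i, ∑ o ∈ bun f i, u i o < ∑ i, ∑ o ∈ B i, u i o :=
    Finset.sum_lt_sum (fun i _ => hle i) ⟨j, Finset.mem_univ j, hj⟩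
  omega

/-- For a loved assignment, EQ1 is equivalent to balancedness of bundle sizes. -/
lemma eq1_bun_iff (u : Fin n → ι → ℤ) {f : ι → Fin n} (hf : ∀ o, u (f o) o = 1) :
    EQ1 u (bun f) ↔ ∀ i j, cnt f j ≤ cnt f i + 1 := by
  constructor
  · intro h i j
    rcases le_or_gt (cnt f j) (cnt f i + 1) with hle | hlt
    · exact hle
    exfalso
    have hij : ∑ o ∈ bun f i, u i o < ∑ o ∈ bun f j, u j o := by
      rw [sum_bun u hf, sum_bun u hf]
      exact_mod_cast by omega
    rcases h i j hij with ⟨g, hg, _, hsum⟩ | ⟨c, hc, hcle, _⟩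
    · have hgu : u j g = 1 := by
        have := mem_bun.mp hg
        rw [← this]
        exact hf g
      have herase : ∑ o ∈ (bun f j).erase g, u j o = (cnt f j : ℤ) - 1 := by
        have := Finset.add_sum_erase (bun f j) (u j) hg
        rw [hgu] at this
        have h2 := sum_bun u hf j
        omega
      rw [herase, sum_bun u hf] at hsum
      have : (cnt f j : ℤ) ≤ (cnt f i : ℤ) + 1 := by omega
      exact_mod_cast absurd this (by exact_mod_cast by omega)
    · have hcu : u i c = 1 := by
        have := mem_bun.mp hc
        rw [← this]
        exact hf c
      omega
  · intro hbal i j hij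
    rw [sum_bun u hf, sum_bun u hf] at hij
    have hij' : cnt f i < cnt f j := by exact_mod_cast hij
    have hne : (bun f j).Nonempty := by
      rw [← Finset.card_pos, ← cnt]
      omega
    obtain ⟨g, hg⟩ := hne
    left
    have hgu : u j g = 1 := by
      have := mem_bun.mp hg
      rw [← this]
      exact hf g
    refine ⟨g, hg, by omega, ?_⟩
    have herase : ∑ o ∈ (bun f j).erase g, u j o = (cnt f j : ℤ) - 1 := by
      have := Finset.add_sum_erase (bun f j) (u j) hg
      rw [hgu] at this
      have h2 := sum_bun u hf j
      omega
    rw [herase, sum_bun u hf]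
    have := hbal i j
    omega

/-- Existence of a Nash optimal allocation, given that some allocation exists. -/
lemma exists_nash (w : Fin n → ι → ℤ) (A₀ : Fin n → Finset ι) (hA₀ : isAllocation A₀) :
    ∃ A, NashOptimal w A := by
  classical
  let s : Finset (Fin n → Finset ι) := Finset.univ.filter fun A => isAllocation A
  have hs : A₀ ∈ s := Finset.mem_filter.mpr ⟨Finset.mem_univ _, hA₀⟩
  obtain ⟨A₁, hA₁s, hA₁max⟩ := Finset.exists_max_image s (posCount w) ⟨A₀, hs⟩
  let s' : Finset (Fin n → Finset ι) := s.filter fun B => posCount w B = posCount w A₁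
  have hs' : A₁ ∈ s' := Finset.mem_filter.mpr ⟨hA₁s, rfl⟩
  obtain ⟨A₂, hA₂s', hA₂max⟩ := Finset.exists_max_image s' (posProd w) ⟨A₁, hs'⟩
  have hA₂s : A₂ ∈ s := (Finset.mem_filter.mp hA₂s').1
  have hA₂cnt : posCount w A₂ = posCount w A₁ := (Finset.mem_filter.mp hA₂s').2
  refine ⟨A₂, (Finset.mem_filter.mp hA₂s).2, fun B hB => ?_⟩
  have hBs : B ∈ s := Finset.mem_filter.mpr ⟨Finset.mem_univ _, hB⟩
  constructor
  · rw [hA₂cnt]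
    exact hA₁max B hBs
  · intro hEq
    have hBs' : B ∈ s' := Finset.mem_filter.mpr ⟨hBs, by omega⟩
    exact hA₂max B hBs'

/-- If a balanced loved assignment exists, every Nash optimal allocation given by a loved
assignment is balanced. -/
lemma nash_balanced (w : Fin n → ι → ℤ) (hw01 : ∀ i o, w i o = 0 ∨ w i o = 1)
    {f g : ι → Fin n} (hf : ∀ o, w (f o) o = 1) (hg : ∀ o, w (g o) o = 1)
    (hbalg : ∀ i j, cnt g j ≤ cnt g i + 1)
    (hN : NashOptimal w (bun f)) : ∀ i j, cnt f j ≤ cnt f i + 1 := by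
  have hw0 : ∀ i o, 0 ≤ w i o := fun i o => by rcases hw01 i o with h | h <;> omega
  by_contra hcon
  push_neg at hcon
  obtain ⟨r, p, hrp⟩ := hcon
  -- minimum of cnt g
  obtain ⟨i₀, _, hi₀⟩ := Finset.exists_min_image Finset.univ (cnt g) ⟨r, Finset.mem_univ r⟩
  have hmin : ∀ k, cnt g i₀ ≤ cnt g k := fun k => hi₀ k (Finset.mem_univ k)
  have hmax : ∀ k, cnt g k ≤ cnt g i₀ + 1 := fun k => hbalg i₀ k
  rcases lt_or_ge (cnt f r) (cnt g i₀) with hcase | hcase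
  · -- r is very poor in f: bring an item to r from someone strictly richer
    have hrg : cnt f r < cnt g r := lt_of_lt_of_le hcase (hmin r)
    obtain ⟨f', j', hlov', hj'r, hgt, hr', hj', hoth⟩ :=
      exchange_poor w _ f g le_rfl hf hg r hrg
    have hgap : cnt f r + 2 ≤ cnt f j' := by
      have h1 := hmin j'
      omega
    refine nash_no_transfer w hw0 hN (bun_alloc f') (x := j') (y := r) hj'r ?_ ?_ ?_ ?_
    · rw [sum_bun w hlov', sum_bun w hf]
      exact_mod_cast congrArg (Nat.cast : ℕ → ℤ) hj'
    · rw [sum_bun w hlov', sum_bun w hf]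
      exact_mod_cast congrArg (Nat.cast : ℕ → ℤ) hr'
    · intro k hk1 hk2
      rw [sum_bun w hlov', sum_bun w hf]
      exact_mod_cast congrArg (Nat.cast : ℕ → ℤ) (hoth k hk2 hk1)
    · rw [sum_bun w hf, sum_bun w hf]
      exact_mod_cast hgap
  · -- p is very rich in f: send an item from p to someone strictly poorer
    have hpg : cnt g p < cnt f p := by
      have := hmax p
      omega
    obtain ⟨f', i', hlov', hi'p, hlt, hp', hi', hoth⟩ :=
      exchange_rich w _ f g le_rfl hf hg p hpg
    have hgap : cnt f i' + 2 ≤ cnt f p := by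
      have h1 := hmax i'
      omega
    refine nash_no_transfer w hw0 hN (bun_alloc f') (x := p) (y := i') (Ne.symm hi'p) ?_ ?_ ?_ ?_
    · rw [sum_bun w hlov', sum_bun w hf]
      exact_mod_cast congrArg (Nat.cast : ℕ → ℤ) hp'
    · rw [sum_bun w hlov', sum_bun w hf]
      exact_mod_cast congrArg (Nat.cast : ℕ → ℤ) hi'
    · intro k hk1 hk2
      rw [sum_bun w hlov', sum_bun w hf]
      exact_mod_cast congrArg (Nat.cast : ℕ → ℤ) (hoth k hk1 hk2)
    · rw [sum_bun w hf, sum_bun w hf]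
      exact_mod_cast hgap

end Stmt15Aux
/-- For a {-1,0,1} instance `I` where every item is valued at 1 by some agent,
`I` admits an EQ1 and Pareto optimal allocation iff every Nash optimal
allocation of the instance `I^G` (obtained by replacing each -1 by 0)
is EQ1 with respect to the valuations of `I^G`. -/
theorem stmt15 {n : ℕ} {ι : Type*} [Fintype ι] [DecidableEq ι]
    (v : Fin n → ι → ℤ)
    (htri : ∀ i o, v i o = -1 ∨ v i o = 0 ∨ v i o = 1)
    (hlove : ∀ o : ι, ∃ i, v i o = 1) :
    (∃ A : Fin n → Finset ι, isAllocation A ∧ EQ1 v A ∧ Pareto v A) ↔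
      (∀ A : Fin n → Finset ι,
        NashOptimal (fun i o => max (v i o) 0) A →
        EQ1 (fun i o => max (v i o) 0) A) := by
  classical
  open Stmt15Aux in
  set w : Fin n → ι → ℤ := fun i o => max (v i o) 0 with hwdef
  have hw01 : ∀ i o, w i o = 0 ∨ w i o = 1 := by
    intro i o
    rcases htri i o with h | h | h <;> simp [hwdef, h]
  have hw1v : ∀ i o, w i o = 1 ↔ v i o = 1 := by
    intro i o
    rcases htri i o with h | h | h <;> simp [hwdef, h]
  have hlovw : ∀ o : ι, ∃ i, w i o = 1 := fun o => by
    obtain ⟨i, hi⟩ := hlove o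
    exact ⟨i, (hw1v i o).mpr hi⟩
  have hv1 : ∀ i o, v i o ≤ 1 := by
    intro i o; rcases htri i o with h | h | h <;> omega
  have hv01 : ∀ i o, v i o = 1 ∨ v i o ≤ 0 := by
    intro i o; rcases htri i o with h | h | h <;> omega
  constructor
  · -- EQ1 + PO allocation exists ⟹ every Nash optimal allocation of I^G is EQ1
    rintro ⟨A₀, hA₀, hEQ, hPO⟩ A hN
    obtain ⟨g, hgl, hgA⟩ := pareto_lover v hv01 hlove hA₀ hPO
    have hA₀g : A₀ = bun g := funext hgA
    rw [hA₀g] at hEQ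
    have hbalg : ∀ i j, cnt g j ≤ cnt g i + 1 := (eq1_bun_iff v hgl).mp hEQ
    obtain ⟨f, hfl, hfA⟩ := nash_lover w hw01 hlovw hN
    have hAf : A = bun f := funext hfA
    rw [hAf] at hN ⊢
    have hglw : ∀ o, w (g o) o = 1 := fun o => (hw1v _ _).mpr (hgl o)
    have hbalf := nash_balanced w hw01 hfl hglw hbalg hN
    exact (eq1_bun_iff w hfl).mpr hbalf
  · -- every Nash optimal allocation of I^G is EQ1 ⟹ an EQ1 + PO allocation exists
    intro hR
    choose f₀ hf₀ using hlove
    obtain ⟨A, hN⟩ := exists_nash w (bun f₀) (bun_alloc f₀)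
    have hEQw := hR A hN
    obtain ⟨f, hfl, hfA⟩ := nash_lover w hw01 hlovw hN
    have hAf : A = bun f := funext hfA
    rw [hAf] at hEQw
    have hbal : ∀ i j, cnt f j ≤ cnt f i + 1 := (eq1_bun_iff w hfl).mp hEQw
    have hflv : ∀ o, v (f o) o = 1 := fun o => (hw1v _ _).mp (hfl o)
    exact ⟨bun f, bun_alloc f, (eq1_bun_iff v hflv).mpr hbal, pareto_bun v hv1 hflv⟩
end

section
/- Every fair division instance in which all agents have the same additive integer valuation (identical valuations) admits an allocation that is simultaneously EQ1 and Pareto optimal. -/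
open Finset

section Aux
variable {n : ℕ} {ι : Type*} [Fintype ι] [DecidableEq ι]

/-- The bundle of agent `k` under the assignment `f`. -/
def bund (f : ι → Fin n) (k : Fin n) : Finset ι := univ.filter (fun o => f o = k)

/-- Value of agent `k`'s bundle. -/
def sval (v : ι → ℤ) (f : ι → Fin n) (k : Fin n) : ℤ := ∑ o ∈ bund f k, v o

/-- Sum of squares potential. -/
def Phi (v : ι → ℤ) (f : ι → Fin n) : ℤ := ∑ k, (sval v f k)^2

lemma bund_alloc (f : ι → Fin n) : isAllocation (bund f) := by
  constructor
  · intro i j hij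
    simp only [bund, disjoint_left, mem_filter]
    rintro a ⟨-, h1⟩ ⟨-, h2⟩
    exact hij (h1 ▸ h2 ▸ rfl)
  · ext o
    simp [bund]

lemma total_eq (v : ι → ℤ) {B : Fin n → Finset ι} (hB : isAllocation B) :
    ∑ k, ∑ o ∈ B k, v o = ∑ o, v o := by
  rw [← Finset.sum_biUnion, hB.2]
  intro i _ j _ hij
  exact hB.1 i j hij

lemma bund_update_self (f : ι → Fin n) (x : ι) {p q : Fin n} (hx : f x = p) (hpq : q ≠ p) :
    bund (Function.update f x q) q = insert x (bund f q) := by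
  ext o
  by_cases h : o = x <;>
    simp [bund, Function.update, h, hpq, hx, Ne.symm hpq]

lemma bund_update_old (f : ι → Fin n) (x : ι) {p q : Fin n} (hx : f x = p) (hpq : q ≠ p) :
    bund (Function.update f x q) p = (bund f p).erase x := by
  ext o
  by_cases h : o = x <;>
    simp [bund, Function.update, h, hpq, hx, Ne.symm hpq]

lemma bund_update_other (f : ι → Fin n) (x : ι) {p q k : Fin n} (hx : f x = p)
    (hkq : k ≠ q) (hkp : k ≠ p) :
    bund (Function.update f x q) k = bund f k := by
  ext o
  by_cases h : o = x <;>
    simp [bund, Function.update, h, hx, Ne.symm hkq, Ne.symm hkp, hkq, hkp]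

lemma Phi_update (v : ι → ℤ) (f : ι → Fin n) (x : ι) {p q : Fin n} (hx : f x = p)
    (hpq : q ≠ p) :
    Phi v (Function.update f x q) =
      Phi v f + 2 * v x * (v x + sval v f q - sval v f p) := by
  have hxq : x ∉ bund f q := by simp [bund, hx, Ne.symm hpq]
  have hxp : x ∈ bund f p := by simp [bund, hx]
  have hq : sval v (Function.update f x q) q = v x + sval v f q := by
    rw [sval, bund_update_self f x hx hpq, Finset.sum_insert hxq]; rfl
  have hp : sval v (Function.update f x q) p = sval v f p - v x := by
    rw [sval, bund_update_old f x hx hpq, Finset.sum_erase_eq_sub hxp]; rfl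
  have hsub : Phi v (Function.update f x q) - Phi v f =
      ∑ k, ((sval v (Function.update f x q) k)^2 - (sval v f k)^2) := by
    rw [Finset.sum_sub_distrib]; rfl
  have hkey : ∑ k, ((sval v (Function.update f x q) k)^2 - (sval v f k)^2) =
      ((sval v (Function.update f x q) q)^2 - (sval v f q)^2) +
      ((sval v (Function.update f x q) p)^2 - (sval v f p)^2) := by
    apply Finset.sum_eq_add_of_mem q p (mem_univ _) (mem_univ _) hpq
    intro k _ hk
    rw [sval, bund_update_other f x hx hk.1 hk.2, ← sval]
    ring
  have h := hsub.trans hkey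
  rw [hq, hp] at h
  linear_combination h

end Aux

/-- Every instance with identical additive valuations admits an allocation that
is simultaneously EQ1 and Pareto optimal. -/
theorem stmt16 {n : ℕ} (hn : 0 < n) {ι : Type*} [Fintype ι] [DecidableEq ι]
    (v : ι → ℤ) :
    ∃ A : Fin n → Finset ι, isAllocation A ∧
      EQ1 (fun _ => v) A ∧ Pareto (fun _ => v) A := by
  classical
  obtain ⟨f, -, hmin⟩ := Finset.exists_min_image (univ : Finset (ι → Fin n)) (Phi v)
    ⟨fun _ => ⟨0, hn⟩, mem_univ _⟩
  refine ⟨bund f, bund_alloc f, ?_, ?_⟩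
  · -- EQ1
    intro i j hlt
    simp only at hlt ⊢
    by_contra hcon
    push_neg at hcon
    obtain ⟨h1, h2⟩ := hcon
    have hij : i ≠ j := by
      rintro rfl; exact lt_irrefl _ hlt
    by_cases hg : ∃ g ∈ bund f j, 0 < v g
    · obtain ⟨g, hgmem, hgpos⟩ := hg
      have hgj : f g = j := by simpa [bund] using hgmem
      have h1g := h1 g hgmem hgpos.le
      rw [Finset.sum_erase_eq_sub hgmem] at h1g
      have key := Phi_update v f g hgj hij
      have : Phi v (Function.update f g i) < Phi v f := by
        have : 2 * v g * (v g + sval v f i - sval v f j) < 0 := by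
          apply mul_neg_of_pos_of_neg (by linarith)
          have : sval v f i < sval v f j - v g := by
            simpa [sval] using h1g
          linarith
        linarith [key]
      exact absurd (hmin _ (mem_univ _)) (not_le.mpr this)
    · by_cases hc : ∃ c ∈ bund f i, v c < 0
      · obtain ⟨c, hcmem, hcneg⟩ := hc
        have hci : f c = i := by simpa [bund] using hcmem
        have h2c := h2 c hcmem hcneg.le
        rw [Finset.sum_erase_eq_sub hcmem] at h2c
        have key := Phi_update v f c hci (Ne.symm hij)
        have : Phi v (Function.update f c j) < Phi v f := by
          have : 2 * v c * (v c + sval v f j - sval v f i) < 0 := by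
            apply mul_neg_of_neg_of_pos (by linarith)
            have : sval v f i - v c < sval v f j := by
              simpa [sval] using h2c
            linarith
          linarith [key]
        exact absurd (hmin _ (mem_univ _)) (not_le.mpr this)
      · push_neg at hg hc
        have hj0 : (∑ o ∈ bund f j, v o) ≤ 0 :=
          Finset.sum_nonpos fun o ho => hg o ho
        have hi0 : 0 ≤ ∑ o ∈ bund f i, v o :=
          Finset.sum_nonneg fun o ho => hc o ho
        linarith
  · -- Pareto
    rintro ⟨B, hB, hle, j0, hlt⟩
    simp only at hle hlt
    have h1 : ∑ k, ∑ o ∈ bund f k, v o = ∑ o, v o := total_eq v (bund_alloc f)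
    have h2 : ∑ k, ∑ o ∈ B k, v o = ∑ o, v o := total_eq v hB
    have : (∑ k, ∑ o ∈ bund f k, v o) < ∑ k, ∑ o ∈ B k, v o :=
      Finset.sum_lt_sum (fun k _ => hle k) ⟨j0, mem_univ _, hlt⟩
    rw [h1, h2] at this
    exact lt_irrefl _ this
end

section
/- Every type-normalized fair division instance with two agents and v_i(o) ∈ {-1, 0, 1} for all agents i and items o admits an allocation that is simultaneously EQ1 and Pareto optimal. -/
open Finset

lemma tri_sum {ι : Type*} [DecidableEq ι] (S : Finset ι) (f : ι → ℤ)
    (h : ∀ o, f o = -1 ∨ f o = 0 ∨ f o = 1) :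
    ∑ o ∈ S, f o =
      ((S.filter (fun o => f o = 1)).card : ℤ) - ((S.filter (fun o => f o = -1)).card : ℤ) := by
  rw [← Finset.sum_boole, ← Finset.sum_boole, ← Finset.sum_sub_distrib]
  apply Finset.sum_congr rfl
  intro o _
  rcases h o with h'|h'|h' <;> simp [h']

lemma exists_one {ι : Type*} (S : Finset ι) (f : ι → ℤ)
    (h : ∀ o, f o = -1 ∨ f o = 0 ∨ f o = 1) (hs : 0 < ∑ o ∈ S, f o) :
    ∃ x ∈ S, f x = 1 := by
  by_contra hc
  push_neg at hc
  have : ∑ o ∈ S, f o ≤ 0 := Finset.sum_nonpos (fun o ho => by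
    rcases h o with h'|h'|h'
    · omega
    · omega
    · exact absurd h' (hc o ho))
  omega

lemma exists_negone {ι : Type*} (S : Finset ι) (f : ι → ℤ)
    (h : ∀ o, f o = -1 ∨ f o = 0 ∨ f o = 1) (hs : ∑ o ∈ S, f o < 0) :
    ∃ x ∈ S, f x = -1 := by
  by_contra hc
  push_neg at hc
  have : 0 ≤ ∑ o ∈ S, f o := Finset.sum_nonneg (fun o ho => by
    rcases h o with h'|h'|h'
    · exact absurd h' (hc o ho)
    · omega
    · omega)
  omega


/-- Every type-normalized instance with two agents and {-1,0,1} valuations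
admits an allocation that is simultaneously EQ1 and Pareto optimal. -/
theorem stmt17 {ι : Type*} [Fintype ι] [DecidableEq ι]
    (v : Fin 2 → ι → ℤ)
    (htri : ∀ i o, v i o = -1 ∨ v i o = 0 ∨ v i o = 1)
    (g c : ℤ)
    (htype : ∀ i : Fin 2,
      (∑ o ∈ Finset.univ.filter (fun o => 0 ≤ v i o), v i o) = g ∧
      (∑ o ∈ Finset.univ.filter (fun o => v i o ≤ 0), v i o) = c) :
    ∃ A : Fin 2 → Finset ι, isAllocation A ∧ EQ1 v A ∧ Pareto v A := by
  classical
  have h0 := htri 0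
  have h1 := htri 1
  -- number of +1 items is the same for both agents, equal to g
  have hg : ∀ i : Fin 2, ((univ.filter (fun o => v i o = 1)).card : ℤ) = g := by
    intro i
    have h := (htype i).1
    rw [tri_sum _ _ (htri i), Finset.filter_filter, Finset.filter_filter] at h
    have e1 : univ.filter (fun o => 0 ≤ v i o ∧ v i o = 1) = univ.filter (fun o => v i o = 1) := by
      ext o; simp; omega
    have e2 : univ.filter (fun o => 0 ≤ v i o ∧ v i o = -1) = (∅ : Finset ι) := by
      ext o; simp; omega
    rw [e1, e2] at h
    simp at h
    omega
  -- the three relevant item classes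
  set B : Finset ι := univ.filter (fun o => v 1 o < v 0 o ∨ (v 0 o = 0 ∧ v 1 o = 0)) with hB
  set E1 : Finset ι := univ.filter (fun o => v 0 o = 1 ∧ v 1 o = 1) with hE1
  set Ed : Finset ι := univ.filter (fun o => v 0 o = -1 ∧ v 1 o = -1) with hEd
  obtain ⟨p, q, hpa, hqd, hlo, hhi⟩ :
      ∃ p q : ℕ, p ≤ E1.card ∧ q ≤ Ed.card ∧
        -1 ≤ 2*(p:ℤ) - 2*q - E1.card + Ed.card ∧ 2*(p:ℤ) - 2*q - E1.card + Ed.card ≤ 1 := by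
    rcases le_total Ed.card E1.card with h|h
    · exact ⟨(E1.card - Ed.card + 1)/2, 0, by omega, by omega, by push_cast; omega, by push_cast; omega⟩
    · exact ⟨0, (Ed.card - E1.card + 1)/2, by omega, by omega, by push_cast; omega, by push_cast; omega⟩
  obtain ⟨P, hPE, hPc⟩ := Finset.exists_subset_card_eq hpa
  obtain ⟨Q, hQE, hQc⟩ := Finset.exists_subset_card_eq hqd
  have hPmem : ∀ o ∈ P, v 0 o = 1 ∧ v 1 o = 1 := by
    intro o ho; have := hPE ho; rw [hE1, Finset.mem_filter] at this; exact this.2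
  have hQmem : ∀ o ∈ Q, v 0 o = -1 ∧ v 1 o = -1 := by
    intro o ho; have := hQE ho; rw [hEd, Finset.mem_filter] at this; exact this.2
  set A0 : Finset ι := B ∪ P ∪ Q with hA0
  -- membership in A0
  have hmemA0 : ∀ o ∈ A0, v 1 o ≤ v 0 o := by
    intro o ho
    rw [hA0, Finset.mem_union, Finset.mem_union] at ho
    rcases ho with (ho|ho)|ho
    · rw [hB, Finset.mem_filter] at ho; rcases ho.2 with h'|h' <;> omega
    · have := hPmem o ho; omega
    · have := hQmem o ho; omega
  have hmemA0c : ∀ o ∈ A0ᶜ, v 0 o ≤ v 1 o := by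
    intro o ho
    rw [Finset.mem_compl, hA0, Finset.mem_union, Finset.mem_union] at ho
    push_neg at ho
    have := ho.1.1
    rw [hB, Finset.mem_filter] at this
    simp only [Finset.mem_univ, true_and] at this
    push_neg at this
    exact this.1
  -- sum of agent 0 over A0
  have hu0 : ∑ o ∈ A0, v 0 o = g - E1.card + p - q := by
    rw [tri_sum _ _ h0]
    rw [hA0, Finset.filter_union, Finset.filter_union, Finset.filter_union, Finset.filter_union]
    have eP1 : P.filter (fun o => v 0 o = 1) = P :=
      Finset.filter_true_of_mem (fun o ho => (hPmem o ho).1)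
    have eQ1 : Q.filter (fun o => v 0 o = 1) = (∅ : Finset ι) :=
      Finset.filter_false_of_mem (fun o ho => by have := (hQmem o ho).1; omega)
    have ePm : P.filter (fun o => v 0 o = -1) = (∅ : Finset ι) :=
      Finset.filter_false_of_mem (fun o ho => by have := (hPmem o ho).1; omega)
    have eQm : Q.filter (fun o => v 0 o = -1) = Q :=
      Finset.filter_true_of_mem (fun o ho => (hQmem o ho).1)
    have eBm : B.filter (fun o => v 0 o = -1) = (∅ : Finset ι) := by
      apply Finset.filter_false_of_mem
      intro o ho
      rw [hB, Finset.mem_filter] at ho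
      have := h1 o; rcases ho.2 with h'|h' <;> omega
    have hsplit : univ.filter (fun o => v 0 o = 1) = B.filter (fun o => v 0 o = 1) ∪ E1 := by
      rw [hB, hE1, Finset.filter_filter]
      ext o
      simp only [Finset.mem_filter, Finset.mem_union, Finset.mem_univ, true_and]
      have := h1 o
      omega
    have hdBE : Disjoint (B.filter (fun o => v 0 o = 1)) E1 := by
      rw [Finset.disjoint_left]
      intro o ho hoE
      rw [hB, Finset.filter_filter, Finset.mem_filter] at ho
      rw [hE1, Finset.mem_filter] at hoE
      rcases ho.2.1 with h'|h' <;> omega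
    have hcard1 : (univ.filter (fun o => v 0 o = 1)).card
        = (B.filter (fun o => v 0 o = 1)).card + E1.card := by
      rw [hsplit, Finset.card_union_of_disjoint hdBE]
    have hdBP : Disjoint (B.filter (fun o => v 0 o = 1)) P := by
      rw [Finset.disjoint_left]
      intro o ho hoP
      rw [hB, Finset.filter_filter, Finset.mem_filter] at ho
      have := hPmem o hoP
      rcases ho.2.1 with h'|h' <;> omega
    rw [eP1, eQ1, ePm, eQm, eBm]
    rw [Finset.union_empty, Finset.empty_union, Finset.empty_union]
    rw [Finset.card_union_of_disjoint hdBP]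
    have := hg 0
    push_cast
    omega
  -- complement counting principle
  have key : ∀ (pr : ι → Prop) (_ : DecidablePred pr),
      (A0.filter pr).card + (A0ᶜ.filter pr).card = (univ.filter pr).card := by
    intro pr _
    rw [← Finset.card_union_of_disjoint
      (Finset.disjoint_filter_filter disjoint_compl_right),
      ← Finset.filter_union, Finset.union_compl]
  -- sum of agent 1 over complement of A0
  have hu1 : ∑ o ∈ A0ᶜ, v 1 o = g - p - Ed.card + q := by
    rw [tri_sum _ _ h1]
    have eB1 : B.filter (fun o => v 1 o = 1) = (∅ : Finset ι) := by
      apply Finset.filter_false_of_mem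
      intro o ho
      rw [hB, Finset.mem_filter] at ho
      have := h0 o; rcases ho.2 with h'|h' <;> omega
    have eP1 : P.filter (fun o => v 1 o = 1) = P :=
      Finset.filter_true_of_mem (fun o ho => (hPmem o ho).2)
    have eQ1 : Q.filter (fun o => v 1 o = 1) = (∅ : Finset ι) :=
      Finset.filter_false_of_mem (fun o ho => by have := (hQmem o ho).2; omega)
    have ePm : P.filter (fun o => v 1 o = -1) = (∅ : Finset ι) :=
      Finset.filter_false_of_mem (fun o ho => by have := (hPmem o ho).2; omega)
    have eQm : Q.filter (fun o => v 1 o = -1) = Q :=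
      Finset.filter_true_of_mem (fun o ho => (hQmem o ho).2)
    have hA1 : (A0.filter (fun o => v 1 o = 1)).card = p := by
      rw [hA0, Finset.filter_union, Finset.filter_union, eB1, eP1, eQ1,
        Finset.empty_union, Finset.union_empty, hPc]
    have hdBQ : Disjoint (B.filter (fun o => v 1 o = -1)) Q := by
      rw [Finset.disjoint_left]
      intro o ho hoQ
      rw [Finset.mem_filter] at ho
      have := hQmem o hoQ
      rw [hB, Finset.mem_filter] at ho
      rcases ho.1.2 with h'|h' <;> omega
    have hAm : (A0.filter (fun o => v 1 o = -1)).card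
        = (B.filter (fun o => v 1 o = -1)).card + q := by
      rw [hA0, Finset.filter_union, Finset.filter_union, ePm, eQm,
        Finset.union_empty, Finset.card_union_of_disjoint hdBQ, hQc]
    have hsplitm : univ.filter (fun o => v 1 o = -1) = B.filter (fun o => v 1 o = -1) ∪ Ed := by
      rw [hB, hEd, Finset.filter_filter]
      ext o
      simp only [Finset.mem_filter, Finset.mem_union, Finset.mem_univ, true_and]
      have := h0 o
      omega
    have hdBEd : Disjoint (B.filter (fun o => v 1 o = -1)) Ed := by
      rw [Finset.disjoint_left]
      intro o ho hoE
      rw [hB, Finset.filter_filter, Finset.mem_filter] at ho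
      rw [hEd, Finset.mem_filter] at hoE
      rcases ho.2.1 with h'|h' <;> omega
    have hcardm : (univ.filter (fun o => v 1 o = -1)).card
        = (B.filter (fun o => v 1 o = -1)).card + Ed.card := by
      rw [hsplitm, Finset.card_union_of_disjoint hdBEd]
    have k1 := key (fun o => v 1 o = 1) (by infer_instance)
    have km := key (fun o => v 1 o = -1) (by infer_instance)
    have := hg 1
    omega
  have hgap : ∑ o ∈ A0ᶜ, v 1 o - 1 ≤ ∑ o ∈ A0, v 0 o ∧
      ∑ o ∈ A0, v 0 o ≤ ∑ o ∈ A0ᶜ, v 1 o + 1 := by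
    rw [hu0, hu1]; omega
  clear_value A0
  clear hu0 hu1 key hA0 hB hE1 hEd hPE hQE hPc hQc hpa hqd hlo hhi hPmem hQmem hg
  refine ⟨![A0, A0ᶜ], ?_, ?_, ?_⟩
  · constructor
    · intro i j hij
      fin_cases i <;> fin_cases j
      · exact absurd rfl hij
      · exact disjoint_compl_right
      · exact disjoint_compl_left
      · exact absurd rfl hij
    · ext x
      simp only [Finset.mem_biUnion, Finset.mem_univ, iff_true, true_and]
      by_cases hx : x ∈ A0
      · exact ⟨0, hx⟩
      · exact ⟨1, by simpa using hx⟩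
  · -- EQ1
    intro i j hlt
    fin_cases i <;> fin_cases j <;>
      simp only [Fin.mk_zero, Fin.mk_one, Fin.isValue, Matrix.cons_val_zero,
        Matrix.cons_val_one, Matrix.head_cons] at hlt ⊢
    · exact absurd hlt (lt_irrefl _)
    · -- agent 0 poorer
      rcases lt_or_ge 0 (∑ o ∈ A0ᶜ, v 1 o) with hpos|hnonpos
      · obtain ⟨x, hx, hx1⟩ := exists_one (A0ᶜ) (v 1) h1 hpos
        left
        refine ⟨x, hx, by omega, ?_⟩
        rw [Finset.sum_erase_eq_sub hx, hx1]
        omega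
      · have hneg : ∑ o ∈ A0, v 0 o < 0 := by omega
        obtain ⟨x, hx, hx1⟩ := exists_negone A0 (v 0) h0 hneg
        right
        refine ⟨x, hx, by omega, ?_⟩
        rw [Finset.sum_erase_eq_sub hx, hx1]
        omega
    · -- agent 1 poorer
      rcases lt_or_ge 0 (∑ o ∈ A0, v 0 o) with hpos|hnonpos
      · obtain ⟨x, hx, hx1⟩ := exists_one A0 (v 0) h0 hpos
        left
        refine ⟨x, hx, by omega, ?_⟩
        rw [Finset.sum_erase_eq_sub hx, hx1]
        omega
      · have hneg : ∑ o ∈ A0ᶜ, v 1 o < 0 := by omega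
        obtain ⟨x, hx, hx1⟩ := exists_negone (A0ᶜ) (v 1) h1 hneg
        right
        refine ⟨x, hx, by omega, ?_⟩
        rw [Finset.sum_erase_eq_sub hx, hx1]
        omega
    · exact absurd hlt (lt_irrefl _)
  · -- Pareto optimality via welfare maximization
    rintro ⟨Bf, ⟨hBd, hBu⟩, hge, j, hgt⟩
    have hBdisj : Disjoint (Bf 0) (Bf 1) := hBd 0 1 (by decide)
    have hBcover : Bf 0 ∪ Bf 1 = univ := by
      ext x
      simp only [Finset.mem_union, Finset.mem_univ, iff_true]
      have hx := (Finset.ext_iff.mp hBu x).mpr (Finset.mem_univ x)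
      rw [Finset.mem_biUnion] at hx
      obtain ⟨i, _, hxi⟩ := hx
      fin_cases i
      · exact Or.inl hxi
      · exact Or.inr hxi
    have hwB : ∑ o ∈ Bf 0, v 0 o + ∑ o ∈ Bf 1, v 1 o
        ≤ ∑ o ∈ univ, max (v 0 o) (v 1 o) := by
      rw [← hBcover, Finset.sum_union hBdisj]
      gcongr with o _ o _
      · exact le_max_left _ _
      · exact le_max_right _ _
    have hwA : ∑ o ∈ A0, v 0 o + ∑ o ∈ A0ᶜ, v 1 o
        = ∑ o ∈ univ, max (v 0 o) (v 1 o) := by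
      rw [← Finset.sum_add_sum_compl A0 (fun o => max (v 0 o) (v 1 o))]
      congr 1
      · exact Finset.sum_congr rfl (fun o ho => (max_eq_left (hmemA0 o ho)).symm)
      · exact Finset.sum_congr rfl (fun o ho => (max_eq_right (hmemA0c o ho)).symm)
    have hge0 := hge 0
    have hge1 := hge 1
    simp only [Fin.isValue, Matrix.cons_val_zero, Matrix.cons_val_one,
      Matrix.head_cons] at hge0 hge1
    have hstrict : ∑ o ∈ A0, v 0 o + ∑ o ∈ A0ᶜ, v 1 o
        < ∑ o ∈ Bf 0, v 0 o + ∑ o ∈ Bf 1, v 1 o := by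
      fin_cases j <;>
        simp only [Fin.mk_zero, Fin.mk_one, Fin.isValue, Matrix.cons_val_zero,
          Matrix.cons_val_one, Matrix.head_cons] at hgt <;> omega
    omega
end

section
/- Consider the fair division instance with three agents and six items where agents 1 and 2 each have values (1, 1, 1, 0, 0, 0) and agent 3 has values (0, 0, 0, 1, 1, 1). This instance is type-normalized with valuations in {0, 1}, and it admits no allocation that is simultaneously EQ1 and Pareto optimal. -/
open Finset

lemma no_pareto_move {n : ℕ} {ι : Type*} [Fintype ι] [DecidableEq ι]
    (v : Fin n → ι → ℤ) (A : Fin n → Finset ι) (hA : isAllocation A)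
    {i j : Fin n} {o : ι} (ho : o ∈ A i) (hij : i ≠ j)
    (hvi : v i o ≤ 0) (hvj : 0 < v j o) : ¬ Pareto v A := by
  obtain ⟨hdisj, hcov⟩ := hA
  have hok : ∀ k, k ≠ i → o ∉ A k := fun k hk h =>
    (Finset.disjoint_left.mp (hdisj i k (Ne.symm hk)) ho) h
  set B : Fin n → Finset ι :=
    fun k => if k = i then (A i).erase o else if k = j then insert o (A j) else A k with hB
  have hmemB : ∀ k x, x ∈ B k ↔ (x ∈ A k ∧ (k = i → x ≠ o)) ∨ (k = j ∧ x = o) := by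
    intro k x
    by_cases hki : k = i
    · subst hki
      simp [hB, Finset.mem_erase, hij, And.comm]
    · by_cases hkj : k = j
      · subst hkj
        rw [show B k = insert o (A k) from by simp [hB, hki], Finset.mem_insert]
        constructor
        · rintro (h | h)
          · exact Or.inr ⟨rfl, h⟩
          · exact Or.inl ⟨h, fun h' => absurd h' hki⟩
        · rintro (⟨h, _⟩ | ⟨_, h⟩)
          · exact Or.inr h
          · exact Or.inl h
      · simp only [hB, if_neg hki, if_neg hkj]
        constructor
        · intro h
          exact Or.inl ⟨h, fun h' => absurd h' hki⟩
        · rintro (⟨h, _⟩ | ⟨h, _⟩)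
          · exact h
          · exact absurd h hkj
  intro hP
  apply hP
  refine ⟨B, ⟨?_, ?_⟩, ?_, ?_⟩
  · intro k l hkl
    rw [Finset.disjoint_left]
    intro x hxk hxl
    rw [hmemB] at hxk hxl
    rcases hxk with ⟨hk1, hk2⟩ | ⟨hkj, hxo⟩ <;> rcases hxl with ⟨hl1, hl2⟩ | ⟨hlj, hxo'⟩
    · exact Finset.disjoint_left.mp (hdisj k l hkl) hk1 hl1
    · subst hxo'
      rcases eq_or_ne k i with h | h
      · exact hk2 h rfl
      · exact hok k h hk1
    · subst hxo
      rcases eq_or_ne l i with h | h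
      · exact hl2 h rfl
      · exact hok l h hl1
    · exact hkl (hkj.trans hlj.symm)
  · apply Finset.eq_univ_of_forall
    intro x
    have : x ∈ Finset.univ.biUnion A := hcov ▸ Finset.mem_univ x
    obtain ⟨k, _, hk⟩ := Finset.mem_biUnion.mp this
    rcases eq_or_ne x o with rfl | hxo
    · exact Finset.mem_biUnion.mpr ⟨j, Finset.mem_univ j, (hmemB j x).mpr (Or.inr ⟨rfl, rfl⟩)⟩
    · exact Finset.mem_biUnion.mpr ⟨k, Finset.mem_univ k,
        (hmemB k x).mpr (Or.inl ⟨hk, fun _ => hxo⟩)⟩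
  · have hBi : B i = (A i).erase o := by simp [hB]
    have hBj : B j = insert o (A j) := by simp [hB, Ne.symm hij]
    intro k
    rcases eq_or_ne k i with rfl | hki
    · rw [hBi, Finset.sum_erase_eq_sub ho]
      linarith
    · rcases eq_or_ne k j with rfl | hkj
      · rw [hBj, Finset.sum_insert (hok _ (Ne.symm hij))]
        linarith
      · simp [hB, hki, hkj]
  · refine ⟨j, ?_⟩
    have hBj : B j = insert o (A j) := by simp [hB, Ne.symm hij]
    rw [hBj, Finset.sum_insert (hok j (Ne.symm hij))]
    linarith

/-- Agents 1 and 2 value the items at (1,1,1,0,0,0); agent 3 at (0,0,0,1,1,1). -/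
def v18 : Fin 3 → Fin 6 → ℤ :=
  ![![1, 1, 1, 0, 0, 0], ![1, 1, 1, 0, 0, 0], ![0, 0, 0, 1, 1, 1]]

/-- The instance has {0,1} valuations, is type-normalized, and admits no
allocation that is simultaneously EQ1 and Pareto optimal. -/
theorem stmt18 :
    (∀ (i : Fin 3) (o : Fin 6), v18 i o = 0 ∨ v18 i o = 1) ∧
    (∃ g c : ℤ, ∀ i : Fin 3,
      (∑ o ∈ Finset.univ.filter (fun o => 0 ≤ v18 i o), v18 i o) = g ∧
      (∑ o ∈ Finset.univ.filter (fun o => v18 i o ≤ 0), v18 i o) = c) ∧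
    ¬ ∃ A : Fin 3 → Finset (Fin 6), isAllocation A ∧ EQ1 v18 A ∧ Pareto v18 A := by
  refine ⟨by decide, ⟨3, 0, by decide⟩, ?_⟩
  rintro ⟨A, hAlloc, hEQ, hP⟩
  obtain ⟨hdisj, hcov⟩ := hAlloc
  have howner : ∀ o : Fin 6, ∃ i, o ∈ A i := by
    intro o
    have : o ∈ Finset.univ.biUnion A := hcov ▸ Finset.mem_univ o
    obtain ⟨i, _, h⟩ := Finset.mem_biUnion.mp this
    exact ⟨i, h⟩
  have h345 : ∀ o : Fin 6, o ∈ ({3, 4, 5} : Finset (Fin 6)) → o ∈ A 2 := by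
    intro o homem
    obtain ⟨i, hi⟩ := howner o
    rcases eq_or_ne i 2 with rfl | hne
    · exact hi
    · exfalso
      have hvi : v18 i o ≤ 0 := by
        fin_cases homem <;> fin_cases i <;> first | decide | exact absurd rfl hne
      have hvj : 0 < v18 2 o := by fin_cases homem <;> decide
      exact no_pareto_move v18 A ⟨hdisj, hcov⟩ hi hne hvi hvj hP
  have h012 : ∀ o : Fin 6, o ∈ ({0, 1, 2} : Finset (Fin 6)) → o ∉ A 2 := by
    intro o homem hmem2
    have hvi : v18 2 o ≤ 0 := by fin_cases homem <;> decide
    have hvj : 0 < v18 0 o := by fin_cases homem <;> decide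
    exact no_pareto_move v18 A ⟨hdisj, hcov⟩ hmem2 (by decide : (2:Fin 3) ≠ 0) hvi hvj hP
  have hA2 : A 2 = ({3, 4, 5} : Finset (Fin 6)) := by
    apply Finset.ext
    intro x
    constructor
    · intro hx
      by_contra h
      have hx012 : x ∈ ({0, 1, 2} : Finset (Fin 6)) := by fin_cases x <;> simp_all
      exact h012 x hx012 hx
    · exact h345 x
  have hsub0 : A 0 ⊆ ({0, 1, 2} : Finset (Fin 6)) := by
    intro x hx
    have hx2 : x ∉ A 2 := Finset.disjoint_left.mp (hdisj 0 2 (by decide)) hx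
    rw [hA2] at hx2
    fin_cases x <;> simp_all
  have hsub1 : A 1 ⊆ ({0, 1, 2} : Finset (Fin 6)) := by
    intro x hx
    have hx2 : x ∉ A 2 := Finset.disjoint_left.mp (hdisj 1 2 (by decide)) hx
    rw [hA2] at hx2
    fin_cases x <;> simp_all
  have hunion : A 0 ∪ A 1 = ({0, 1, 2} : Finset (Fin 6)) := by
    apply Finset.Subset.antisymm
    · intro x hx
      rcases Finset.mem_union.mp hx with h | h
      · exact hsub0 h
      · exact hsub1 h
    · intro x hx
      obtain ⟨i, hi⟩ := howner x
      fin_cases i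
      · exact Finset.mem_union_left _ hi
      · exact Finset.mem_union_right _ hi
      · exact absurd hi (h012 x hx)
  have hvv : ∀ o, v18 0 o = v18 1 o := by decide
  have hab : (∑ o ∈ A 0, v18 0 o) + (∑ o ∈ A 1, v18 1 o) = 3 := by
    have hs := Finset.sum_union (f := v18 0) (hdisj 0 1 (by decide))
    rw [hunion] at hs
    have h3 : ∑ o ∈ ({0, 1, 2} : Finset (Fin 6)), v18 0 o = 3 := by decide
    have hcg : ∑ o ∈ A 1, v18 0 o = ∑ o ∈ A 1, v18 1 o :=
      Finset.sum_congr rfl (fun o _ => hvv o)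
    rw [h3, hcg] at hs
    omega
  have ha0 : 0 ≤ ∑ o ∈ A 0, v18 0 o :=
    Finset.sum_nonneg (fun o _ => by fin_cases o <;> decide)
  have hb0 : 0 ≤ ∑ o ∈ A 1, v18 1 o :=
    Finset.sum_nonneg (fun o _ => by fin_cases o <;> decide)
  have h2 : ∑ o ∈ A 2, v18 2 o = 3 := by rw [hA2]; decide
  rcases le_total (∑ o ∈ A 0, v18 0 o) (∑ o ∈ A 1, v18 1 o) with hle | hle
  · have ha1 : ∑ o ∈ A 0, v18 0 o ≤ 1 := by omega
    rcases hEQ 0 2 (by omega) with ⟨g, hg, _, hgle⟩ | ⟨c, hc, hcle, _⟩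
    · rw [hA2] at hg hgle
      have : ∑ o ∈ ({3, 4, 5} : Finset (Fin 6)).erase g, v18 2 o = 2 := by
        fin_cases hg <;> decide
      omega
    · have hc012 := hsub0 hc
      have : v18 0 c = 1 := by fin_cases hc012 <;> decide
      omega
  · have hb1 : ∑ o ∈ A 1, v18 1 o ≤ 1 := by omega
    rcases hEQ 1 2 (by omega) with ⟨g, hg, _, hgle⟩ | ⟨c, hc, hcle, _⟩
    · rw [hA2] at hg hgle
      have : ∑ o ∈ ({3, 4, 5} : Finset (Fin 6)).erase g, v18 2 o = 2 := by
        fin_cases hg <;> decide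
      omega
    · have hc012 := hsub1 hc
      have : v18 1 c = 1 := by fin_cases hc012 <;> decide
      omega
end

section
/- In every fair division instance with v_i(o) ∈ {-1, 0, 1} for all agents i and items o, every allocation that is both equitable (EQ) and Pareto optimal is envy-free. -/
open Finset

/-- Exact equitability. -/
def EQ {n : ℕ} {ι : Type*} [DecidableEq ι]
    (v : Fin n → ι → ℤ) (A : Fin n → Finset ι) : Prop :=
  ∀ i j : Fin n, ∑ o ∈ A i, v i o = ∑ o ∈ A j, v j o

/-- Envy-freeness. -/
def EF {n : ℕ} {ι : Type*} [DecidableEq ι]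
    (v : Fin n → ι → ℤ) (A : Fin n → Finset ι) : Prop :=
  ∀ i j : Fin n, ∑ o ∈ A j, v i o ≤ ∑ o ∈ A i, v i o

/-- For {-1,0,1} valuations, every EQ and Pareto optimal allocation is envy-free. -/
theorem stmt19 {n : ℕ} {ι : Type*} [Fintype ι] [DecidableEq ι]
    (v : Fin n → ι → ℤ)
    (htri : ∀ i o, v i o = -1 ∨ v i o = 0 ∨ v i o = 1)
    (A : Fin n → Finset ι) (hA : isAllocation A)
    (hEQ : EQ v A) (hPO : Pareto v A) :
    EF v A := by
  -- Key claim: for any o ∈ A j and any i ≠ j, v i o ≤ v j o.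
  have key : ∀ i j : Fin n, i ≠ j → ∀ o ∈ A j, v i o ≤ v j o := by
    intro i j hij o ho
    by_contra hlt
    replace hlt : v j o < v i o := not_le.mp hlt
    have hji : v j o ≤ 0 ∧ 0 ≤ v i o := by
      rcases htri i o with h1 | h1 | h1 <;> rcases htri j o with h2 | h2 | h2 <;> omega
    have honi : o ∉ A i := by
      intro hoi
      exact Finset.disjoint_left.mp (hA.1 i j hij) hoi ho
    -- Build a Pareto improvement: move o from j to i.
    set B : Fin n → Finset ι := fun k => if k = i then insert o (A i) else (A k).erase o
      with hB
    apply hPO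
    refine ⟨B, ⟨?_, ?_⟩, ?_, ?_⟩
    · intro k l hkl
      simp only [hB]
      split_ifs with hk hl hl
      · exact absurd (hk.trans hl.symm) hkl
      · rw [Finset.disjoint_insert_left]
        exact ⟨Finset.notMem_erase o _,
          (hA.1 i l (by rw [← hk]; simpa [hl] using hkl)).mono_right
            (Finset.erase_subset _ _)⟩
      · rw [Finset.disjoint_insert_right]
        exact ⟨Finset.notMem_erase o _,
          (hA.1 k i (by rw [← hl]; exact hkl)).mono_left (Finset.erase_subset _ _)⟩
      · exact ((hA.1 k l hkl).mono_left (Finset.erase_subset _ _)).mono_right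
          (Finset.erase_subset _ _)
    · apply Finset.eq_univ_iff_forall.mpr
      intro x
      have hx : x ∈ Finset.univ.biUnion A := by rw [hA.2]; exact Finset.mem_univ x
      rcases Finset.mem_biUnion.mp hx with ⟨k, -, hxk⟩
      by_cases hxo : x = o
      · exact Finset.mem_biUnion.mpr ⟨i, Finset.mem_univ i,
          by simp [hB, hxo]⟩
      · by_cases hki : k = i
        · exact Finset.mem_biUnion.mpr ⟨i, Finset.mem_univ i,
            by simp [hB, hki ▸ hxk]⟩
        · exact Finset.mem_biUnion.mpr ⟨k, Finset.mem_univ k,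
            by simp [hB, hki, Finset.mem_erase, hxo, hxk]⟩
    · intro k
      by_cases hki : k = i
      · subst hki
        simp only [hB, if_pos rfl, Finset.sum_insert honi]
        linarith [hji.2]
      · by_cases hkj : k = j
        · subst hkj
          simp only [hB, if_neg hki, Finset.sum_erase_eq_sub ho]
          linarith [hji.1]
        · have : o ∉ A k := by
            intro hok
            exact Finset.disjoint_left.mp (hA.1 k j hkj) hok ho
          simp [hB, hki, Finset.erase_eq_of_notMem this]
    · rcases lt_or_ge 0 (v i o) with hpos | hnp
      · refine ⟨i, ?_⟩
        simp only [hB, if_pos rfl, Finset.sum_insert honi]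
        linarith
      · refine ⟨j, ?_⟩
        have hneg : v j o < 0 := by omega
        simp only [hB, if_neg (Ne.symm hij), Finset.sum_erase_eq_sub ho]
        linarith
  intro i j
  by_cases hij : i = j
  · subst hij; exact le_refl _
  · calc ∑ o ∈ A j, v i o ≤ ∑ o ∈ A j, v j o :=
          Finset.sum_le_sum (fun o ho => key i j hij o ho)
      _ = ∑ o ∈ A i, v i o := hEQ j i
end
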